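/- arXiv:1408.5812 — 3 statements merged into one kernel-verified Lean document; each statement's English description precedes it below -/
import Mathlib

section
/- Let μ be a probability measure on a space X and let (A_R)_{R≥1} be a decreasing family of measurable sets such that μ(A_R)·R → πεc as R → ∞ for some constants ε, c > 0. Define Ψ_R = (2/π)·ψ·(1_{A_1} − 1_{A_R}) where ψ(q) = R₁ on A_{R₁} \ A_{R₁'} with R₁ the depth parameter (i.e., ψ takes value approximately S on A_S \ ∪_{S'>S} A_{S'}). Then lim_{R→∞} ‖Ψ_R‖_{L¹}/log R = 2εc. -/
/-!
Write `G t = μ {ψ ≥ t}`; after the substitution `t = (2/π) S` the hypothesis says `t G(t) → 2εc`.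
By the layer-cake formula `∫_{ψ < T} ψ dμ = ∫₀ᵀ G − T G(T)`. The boundary term is bounded, and
since `G t − 2εc / t = o(1/t)` while `∫₁ᵀ dt/t = log T` diverges, `∫₁ᵀ G = 2εc log T + o(log T)`.
Replacing `T` by `(2/π) R` and cutting off the fixed region `ψ < 2/π` change nothing to first order.
-/

open MeasureTheory Real Filter Set Asymptotics

theorem intervalIntegral_isLittleO_log {h : ℝ → ℝ}
    (hint : ∀ T, 1 ≤ T → IntervalIntegrable h volume 1 T)
    (hh : Tendsto (fun t => t * h t) atTop (nhds 0)) :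
    (fun T => ∫ t in (1:ℝ)..T, h t) =o[atTop] Real.log := by
  refine isLittleO_iff.2 fun δ hδ => ?_
  obtain ⟨t₀, ht₀⟩ := Metric.tendsto_atTop.1 hh (δ / 2) (half_pos hδ)
  set t₁ := max t₀ 1
  have hhead : ∀ᶠ T in atTop, ‖∫ t in (1:ℝ)..t₁, h t‖ ≤ δ / 2 * Real.log T :=
    (tendsto_log_atTop.const_mul_atTop (half_pos hδ)).eventually_ge_atTop _
  filter_upwards [hhead, eventually_ge_atTop t₁] with T hhead hT
  have ht₁ : 0 < t₁ := lt_of_lt_of_le one_pos (le_max_right _ _)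
  have htail : ‖∫ t in t₁..T, h t‖ ≤ δ / 2 * Real.log T := by
    calc ‖∫ t in t₁..T, h t‖ ≤ ∫ t in t₁..T, δ / 2 * t⁻¹ := by
          refine intervalIntegral.norm_integral_le_of_norm_le hT
            (Eventually.of_forall fun t ht => ?_) ?_
          · have htpos : 0 < t := ht₁.trans ht.1
            have := (ht₀ t ((le_max_left _ _).trans ht.1.le)).le
            rw [dist_zero_right, norm_mul, Real.norm_of_nonneg htpos.le] at this
            rw [le_mul_inv_iff₀ htpos, mul_comm]
            exact this
          · exact (intervalIntegral.intervalIntegrable_inv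
              (fun t ht => (ht₁.trans_le (uIcc_of_le hT ▸ ht).1).ne')
              continuousOn_id).const_mul _
      _ = δ / 2 * Real.log (T / t₁) := by
          rw [intervalIntegral.integral_const_mul, integral_inv_of_pos ht₁ (ht₁.trans_le hT)]
      _ ≤ δ / 2 * Real.log T := by
          gcongr
          · exact div_pos (ht₁.trans_le hT) ht₁
          · exact div_le_self (ht₁.le.trans hT) (le_max_right _ _)
  have hT1 : 1 ≤ T := (le_max_right _ _).trans hT
  rw [← intervalIntegral.integral_add_adjacent_intervals (hint t₁ (le_max_right _ _))
      ((hint t₁ (le_max_right _ _)).symm.trans (hint T hT1)),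
    Real.norm_of_nonneg (Real.log_nonneg hT1)]
  linarith [norm_add_le (∫ t in (1:ℝ)..t₁, h t) (∫ t in t₁..T, h t)]

theorem tendsto_intervalIntegral_div_log {g : ℝ → ℝ} {K : ℝ}
    (hint : ∀ T, 1 ≤ T → IntervalIntegrable g volume 1 T)
    (hg : Tendsto (fun t => t * g t) atTop (nhds K)) :
    Tendsto (fun T => (∫ t in (1:ℝ)..T, g t) / Real.log T) atTop (nhds K) := by
  have hinv : ∀ T, 1 ≤ T → IntervalIntegrable (fun t => K * t⁻¹) volume 1 T := fun T hT =>
    (intervalIntegral.intervalIntegrable_inv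
      (fun t ht => (one_pos.trans_le (uIcc_of_le hT ▸ ht).1).ne') continuousOn_id).const_mul _
  have hmul : Tendsto (fun t => t * (g t - K * t⁻¹)) atTop (nhds 0) := by
    refine (sub_self K ▸ hg.sub_const K).congr' ?_
    filter_upwards [eventually_gt_atTop 0] with t ht
    field_simp
  have herr := (intervalIntegral_isLittleO_log (fun T hT => (hint T hT).sub (hinv T hT))
    hmul).tendsto_div_nhds_zero
  rw [← add_zero K]
  refine (herr.const_add K).congr' ?_
  filter_upwards [eventually_gt_atTop 1] with T hT
  rw [intervalIntegral.integral_sub (hint T hT.le) (hinv T hT.le),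
    intervalIntegral.integral_const_mul, integral_inv_of_pos one_pos (one_pos.trans hT), div_one]
  field_simp [(Real.log_pos hT).ne']
  ring

theorem Filter.Tendsto.div_log_comp_const_mul {F : ℝ → ℝ} {K b : ℝ}
    (hF : Tendsto (fun T => F T / Real.log T) atTop (nhds K)) (hb : 0 < b) :
    Tendsto (fun R => F (b * R) / Real.log R) atTop (nhds K) := by
  have hratio : Tendsto (fun R => Real.log (b * R) / Real.log R) atTop (nhds 1) := by
    rw [← zero_add 1]
    refine ((tendsto_const_nhds (x := Real.log b)).div_atTop tendsto_log_atTop).add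
      tendsto_const_nhds |>.congr' ?_
    filter_upwards [eventually_gt_atTop 1] with R hR
    rw [Real.log_mul hb.ne' (one_pos.trans hR).ne', add_div, div_self (Real.log_pos hR).ne']
  rw [← mul_one K]
  refine ((hF.comp (tendsto_id.const_mul_atTop hb)).mul hratio).congr' ?_
  filter_upwards [(tendsto_id.const_mul_atTop hb).eventually_gt_atTop 1] with R hbR
  exact div_mul_div_cancel₀ (Real.log_pos hbR).ne'

section TailIntegral

variable {α : Type*} [MeasurableSpace α] {μ : Measure α} [IsFiniteMeasure μ] {f : α → ℝ}

theorem integrableOn_setOf_lt (hf : Measurable f) (hf0 : 0 ≤ᵐ[μ] f) (T : ℝ) :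
    IntegrableOn f {x | f x < T} μ :=
  Measure.integrableOn_of_bounded (measure_ne_top μ _) hf.aestronglyMeasurable (M := T) <| by
    filter_upwards [ae_restrict_mem (measurableSet_lt hf measurable_const), ae_restrict_of_ae hf0]
      with x hxT hx0
    rw [Real.norm_of_nonneg hx0]
    exact hxT.le

theorem antitone_measureReal_setOf_le : Antitone fun t => μ.real {x | t ≤ f x} :=
  fun _ _ hst => measureReal_mono fun _ hx => hst.trans hx

theorem setIntegral_lt_eq_intervalIntegral_sub (hf : Measurable f) (hf0 : 0 ≤ᵐ[μ] f) {T : ℝ}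
    (hT : 0 ≤ T) :
    ∫ x in {x | f x < T}, f x ∂μ
      = (∫ t in (0:ℝ)..T, μ.real {x | t ≤ f x}) - T * μ.real {x | T ≤ f x} := by
  have hlt : MeasurableSet {x | f x < T} := measurableSet_lt hf measurable_const
  have hconst : T * μ.real {x | T ≤ f x} = ∫ _ in Ioc 0 T, μ.real {x | T ≤ f x} := by
    rw [setIntegral_const, Real.volume_real_Ioc_of_le hT, sub_zero, smul_eq_mul]
  rw [(integrableOn_setOf_lt hf hf0 T).integral_eq_integral_Ioc_meas_le (M := T)
      (ae_restrict_of_ae hf0) ((ae_restrict_mem hlt).mono fun x hx => le_of_lt hx),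
    intervalIntegral.integral_of_le hT, hconst,
    ← integral_sub (antitone_measureReal_setOf_le.intervalIntegrable (a := 0) (b := T)).1
      (integrableOn_const measure_Ioc_lt_top.ne)]
  refine setIntegral_congr_fun measurableSet_Ioc fun t ht => ?_
  have hsdiff : {x | t ≤ f x} ∩ {x | f x < T} = {x | t ≤ f x} \ {x | T ≤ f x} := by
    ext x; simp [not_le]
  have hsub : {x | T ≤ f x} ⊆ {x | t ≤ f x} := fun x hx => ht.2.trans hx
  rw [measureReal_def, Measure.restrict_apply (measurableSet_le measurable_const hf),
    ← measureReal_def, hsdiff, measureReal_sdiff hsub (measurableSet_le measurable_const hf)]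

theorem tendsto_setIntegral_lt_div_log (hf : Measurable f) (hf0 : 0 ≤ᵐ[μ] f) {K : ℝ}
    (htail : Tendsto (fun t => t * μ.real {x | t ≤ f x}) atTop (nhds K)) :
    Tendsto (fun T => (∫ x in {x | f x < T}, f x ∂μ) / Real.log T) atTop (nhds K) := by
  have hhead : Tendsto (fun T => (∫ t in (0:ℝ)..1, μ.real {x | t ≤ f x}) / Real.log T) atTop
      (nhds 0) :=
    tendsto_const_nhds.div_atTop tendsto_log_atTop
  have hbody := tendsto_intervalIntegral_div_log
    (fun T _ => antitone_measureReal_setOf_le.intervalIntegrable) htail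
  have hboundary := htail.div_atTop tendsto_log_atTop
  rw [← zero_add K, ← sub_zero (0 + K)]
  refine ((hhead.add hbody).sub hboundary).congr' ?_
  filter_upwards [eventually_ge_atTop 1] with T hT
  rw [setIntegral_lt_eq_intervalIntegral_sub hf hf0 (zero_le_one.trans hT),
    ← intervalIntegral.integral_add_adjacent_intervals (a := 0) (b := 1) (c := T)
      antitone_measureReal_setOf_le.intervalIntegrable
      antitone_measureReal_setOf_le.intervalIntegrable]
  ring

end TailIntegral

theorem stmt_4_general {X : Type*} [MeasurableSpace X] (μ : Measure X) [IsProbabilityMeasure μ]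
    (ψ : X → ℝ) (hψmeas : Measurable ψ) (hψpos : ∀ x, 0 ≤ ψ x)
    (ε c : ℝ)
    (htail : Tendsto (fun S : ℝ => (μ {x | 2 / π * S ≤ ψ x}).toReal * S)
      atTop (nhds (π * ε * c))) :
    Tendsto
      (fun R : ℝ =>
        (∫ x in {x | 2 / π ≤ ψ x ∧ ψ x < 2 / π * R}, ψ x ∂μ) / Real.log R)
      atTop (nhds (2 * ε * c)) := by
  have hb : 0 < 2 / π := by positivity
  have hK : Tendsto (fun t => t * μ.real {x | t ≤ ψ x}) atTop (nhds (2 * ε * c)) := by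
    have := (htail.comp (tendsto_id.const_mul_atTop (by positivity : 0 < π / 2))).const_mul (2 / π)
    convert this using 2 with t
    · simp only [Function.comp, id, measureReal_def]
      field_simp
    · field_simp
  have hfar :=
    (tendsto_setIntegral_lt_div_log hψmeas (ae_of_all _ hψpos) hK).div_log_comp_const_mul hb
  have hnear := (tendsto_const_nhds (x := ∫ x in {x | ψ x < 2 / π}, ψ x ∂μ)).div_atTop
    tendsto_log_atTop
  rw [← sub_zero (2 * ε * c)]
  refine (hfar.sub hnear).congr' ?_
  filter_upwards [eventually_ge_atTop 1] with R hR
  have hband :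
      {x | 2 / π ≤ ψ x ∧ ψ x < 2 / π * R} = {x | ψ x < 2 / π * R} \ {x | ψ x < 2 / π} := by
    ext x; simp [and_comm]
  rw [hband, setIntegral_sdiff (measurableSet_lt hψmeas measurable_const)
    (integrableOn_setOf_lt hψmeas (ae_of_all _ hψpos) _)
    (fun x hx => lt_of_lt_of_le hx (le_mul_of_one_le_right hb.le hR)), sub_div]

/-- L¹ asymptotics of the truncations Ψ_R (Lemma 5.1, first part, abstract version). -/
theorem stmt_4 {X : Type*} [MeasurableSpace X] (μ : Measure X) [IsProbabilityMeasure μ]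
    (ψ : X → ℝ) (hψmeas : Measurable ψ) (hψpos : ∀ x, 0 ≤ ψ x)
    (ε c : ℝ) (hε : 0 < ε) (hc : 0 < c)
    (htail : Tendsto (fun S : ℝ => (μ {x | 2 / π * S ≤ ψ x}).toReal * S)
      atTop (nhds (π * ε * c))) :
    Tendsto
      (fun R : ℝ =>
        (∫ x in {x | 2 / π ≤ ψ x ∧ ψ x < 2 / π * R}, ψ x ∂μ) / Real.log R)
      atTop (nhds (2 * ε * c)) :=
  stmt_4_general μ ψ hψmeas hψpos ε c htail
end

section
/- Let μ be a probability measure and ψ : X → [0,∞) measurable with μ(ψ ≥ (2/π)S) ~ πεc/S as S → ∞ for constants ε, c > 0. Let Ψ_R be ψ restricted to the set {1 ≤ (π/2)ψ < R} (zero elsewhere). Then lim_{R→∞} ‖Ψ_R‖_{L²}/√R = 2√(εc)/√π. -/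
/-!
Write `G t = μ {ψ ≥ t}`. The layer-cake formula for the square of the truncation
`ψ · 1_{ψ < b}` gives `∫_{ψ < b} ψ² dμ = ∫₀ᵇ 2t G(t) dt - b² G(b)`. The hypothesis says
`t G(t) → L = 2εc`, so the integral is `2Lb + o(b)` (a Cesàro mean of `2t G(t)`) and the
boundary term is `Lb + o(b)`. Hence `∫_{ψ < b} ψ² dμ = Lb + o(b)`, and with `b = (2/π) R`
the truncated second moment is `(4εc/π) R + o(R)`.
-/

open MeasureTheory Real Filter Topology

theorem tendsto_intervalIntegral_div_atTop {h : ℝ → ℝ} {a L : ℝ}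
    (hint : ∀ b, IntervalIntegrable h volume a b) (hlim : Tendsto h atTop (𝓝 L)) :
    Tendsto (fun R => (∫ t in a..R, h t) / R) atTop (𝓝 L) := by
  have hint' : ∀ b, IntervalIntegrable (fun t => h t - L) volume a b :=
    fun b => (hint b).sub intervalIntegrable_const
  have hsmall : (fun R => ∫ t in a..R, (h t - L)) =o[atTop] id := by
    refine Asymptotics.IsLittleO.of_bound fun δ hδ => ?_
    have hclose : ∀ᶠ t in atTop, ‖h t - L‖ ≤ δ / 2 := by
      simpa [dist_eq_norm] using hlim.eventually (Metric.closedBall_mem_nhds L (half_pos hδ))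
    obtain ⟨M, hM⟩ := eventually_atTop.1 (hclose.and (eventually_ge_atTop 0))
    have hM0 : 0 ≤ M := (hM M le_rfl).2
    filter_upwards [eventually_ge_atTop M,
      eventually_ge_atTop (2 * ‖∫ t in a..M, (h t - L)‖ / δ)] with R hRM hRC
    have hfar : ‖∫ t in M..R, (h t - L)‖ ≤ δ / 2 * R := by
      refine (intervalIntegral.norm_integral_le_of_norm_le_const (C := δ / 2)
        fun t ht => ?_).trans ?_
      · rw [Set.uIoc_of_le hRM] at ht
        exact (hM t ht.1.le).1
      · rw [abs_of_nonneg (sub_nonneg.2 hRM)]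
        nlinarith
    have hnear : ‖∫ t in a..M, (h t - L)‖ ≤ δ / 2 * R := by
      rw [div_le_iff₀ hδ] at hRC
      linarith
    rw [← intervalIntegral.integral_add_adjacent_intervals (hint' M)
      ((hint' M).symm.trans (hint' R)), id, Real.norm_of_nonneg (hM0.trans hRM)]
    linarith [norm_add_le (∫ t in a..M, (h t - L)) (∫ t in M..R, (h t - L))]
  have hlin : Tendsto (fun R => L - L * a / R) atTop (𝓝 L) := by
    simpa using tendsto_const_nhds.sub ((tendsto_const_nhds (x := L * a)).div_atTop tendsto_id)
  refine (zero_add L ▸ hsmall.tendsto_div_nhds_zero.add hlin).congr' ?_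
  filter_upwards [eventually_ne_atTop 0] with R hR
  rw [intervalIntegral.integral_sub (hint R) intervalIntegrable_const,
    intervalIntegral.integral_const, smul_eq_mul, id]
  field_simp
  ring

section

variable {α : Type*} [MeasurableSpace α] (μ : Measure α) [IsFiniteMeasure μ]

theorem intervalIntegrable_mul_measureReal_le (f : α → ℝ) (a b : ℝ) :
    IntervalIntegrable (fun s => 2 * s * μ.real {x | s ≤ f x}) volume a b := by
  have hanti : Antitone fun s => μ.real {x | s ≤ f x} :=
    fun _ _ hst => measureReal_mono fun _ hx => hst.trans hx
  exact hanti.intervalIntegrable.continuousOn_mul (continuousOn_const.mul continuousOn_id)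

theorem integral_sq_eq_intervalIntegral_mul_measureReal_le {f : α → ℝ} (hf : Measurable f)
    (hf0 : ∀ x, 0 ≤ f x) {b : ℝ} (hb : 0 ≤ b) (hfb : ∀ x, f x ≤ b) :
    ∫ x, f x ^ 2 ∂μ = ∫ s in 0..b, 2 * s * μ.real {x | s ≤ f x} := by
  have hsq_le : ∀ x, f x ^ 2 ≤ b ^ 2 := fun x => pow_le_pow_left₀ (hf0 x) (hfb x) 2
  have hint : Integrable (fun x => f x ^ 2) μ :=
    .of_bound (hf.pow_const 2).aestronglyMeasurable (b ^ 2) (.of_forall fun x => by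
      rw [Real.norm_of_nonneg (sq_nonneg _)]; exact hsq_le x)
  rw [hint.integral_eq_integral_Ioc_meas_le (.of_forall fun x => sq_nonneg _)
    (.of_forall hsq_le), ← intervalIntegral.integral_of_le (sq_nonneg b)]
  have hsubst := intervalIntegral.integral_comp_mul_deriv_of_deriv_nonneg
    (f := fun s => s ^ 2) (f' := fun s => 2 * s) (g := fun t => μ.real {x | t ≤ f x ^ 2})
    (a := 0) (b := b) (by fun_prop) (fun s _ => by simpa using hasDerivAt_pow 2 s)
    (fun s hs => by simp only [min_eq_left hb, max_eq_right hb] at hs; linarith [hs.1])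
  rw [zero_pow two_ne_zero] at hsubst
  rw [← hsubst]
  refine intervalIntegral.integral_congr fun s hs => ?_
  rw [Set.uIcc_of_le hb] at hs
  simp only [Function.comp_apply, pow_le_pow_iff_left₀ hs.1 (hf0 _) two_ne_zero]
  ring

theorem setIntegral_sq_lt_eq {f : α → ℝ} (hf : Measurable f) (hf0 : ∀ x, 0 ≤ f x) {b : ℝ}
    (hb : 0 ≤ b) :
    ∫ x in {x | f x < b}, f x ^ 2 ∂μ =
      (∫ s in 0..b, 2 * s * μ.real {x | s ≤ f x}) - b ^ 2 * μ.real {x | b ≤ f x} := by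
  set F := {x | f x < b}.indicator f
  have hlt : MeasurableSet {x | f x < b} := hf measurableSet_Iio
  have hF0 : ∀ x, 0 ≤ F x := fun x => Set.indicator_nonneg (fun x _ => hf0 x) x
  have hFb : ∀ x, F x ≤ b := fun x => by
    by_cases hx : f x < b
    · simpa [F, hx] using hx.le
    · simpa [F, hx] using hb
  have hlevel : ∀ s ∈ Set.Ioc 0 b, {x | s ≤ F x} = {x | s ≤ f x} \ {x | b ≤ f x} := by
    intro s hs
    ext x
    by_cases hx : f x < b
    · simp [F, hx]
    · simpa [F, hx] using hs.1
  calc ∫ x in {x | f x < b}, f x ^ 2 ∂μ = ∫ x, F x ^ 2 ∂μ := by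
        rw [← integral_indicator hlt]
        congr 1 with x
        by_cases hx : f x < b <;> simp [F, hx]
    _ = ∫ s in 0..b, 2 * s * μ.real {x | s ≤ F x} :=
        integral_sq_eq_intervalIntegral_mul_measureReal_le μ (hf.indicator hlt) hF0 hb hFb
    _ = ∫ s in 0..b, (2 * s * μ.real {x | s ≤ f x} - 2 * s * μ.real {x | b ≤ f x}) := by
        refine intervalIntegral.integral_congr_ae (.of_forall fun s hs => ?_)
        rw [Set.uIoc_of_le hb] at hs
        rw [hlevel s hs, measureReal_sdiff (s₁ := {x | s ≤ f x}) (s₂ := {x | b ≤ f x})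
          (fun x hx => hs.2.trans hx) (hf measurableSet_Ici)]
        ring
    _ = _ := by
        rw [intervalIntegral.integral_sub (intervalIntegrable_mul_measureReal_le μ f 0 b)
          (Continuous.intervalIntegrable (by fun_prop) 0 b),
          intervalIntegral.integral_mul_const, intervalIntegral.integral_const_mul,
          integral_id]
        ring

theorem tendsto_setIntegral_sq_lt_div_atTop {f : α → ℝ} (hf : Measurable f)
    (hf0 : ∀ x, 0 ≤ f x) {L : ℝ}
    (htail : Tendsto (fun t => t * μ.real {x | t ≤ f x}) atTop (𝓝 L)) :
    Tendsto (fun b => (∫ x in {x | f x < b}, f x ^ 2 ∂μ) / b) atTop (𝓝 L) := by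
  have hmain : Tendsto (fun b => (∫ s in 0..b, 2 * s * μ.real {x | s ≤ f x}) / b) atTop
      (𝓝 (2 * L)) :=
    tendsto_intervalIntegral_div_atTop (intervalIntegrable_mul_measureReal_le μ f 0)
      (by simpa only [mul_assoc] using htail.const_mul 2)
  have hboundary : Tendsto (fun b => b ^ 2 * μ.real {x | b ≤ f x} / b) atTop (𝓝 L) := by
    refine htail.congr' ?_
    filter_upwards [eventually_ne_atTop 0] with b hb
    field_simp
  have hdiff := hmain.sub hboundary
  rw [two_mul, add_sub_cancel_right] at hdiff
  refine hdiff.congr' ?_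
  filter_upwards [eventually_ge_atTop 0] with b hb
  rw [setIntegral_sq_lt_eq μ hf hf0 hb, sub_div]

theorem tendsto_setIntegral_sq_Ico_div_atTop {f : α → ℝ} (hf : Measurable f)
    (hf0 : ∀ x, 0 ≤ f x) {L : ℝ}
    (htail : Tendsto (fun t => t * μ.real {x | t ≤ f x}) atTop (𝓝 L)) {a : ℝ} (ha : 0 < a) :
    Tendsto (fun R => (∫ x in {x | a ≤ f x ∧ f x < a * R}, f x ^ 2 ∂μ) / R) atTop
      (𝓝 (a * L)) := by
  have hlt : ∀ b, MeasurableSet {x | f x < b} := fun b => hf measurableSet_Iio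
  have hint : ∀ b, IntegrableOn (fun x => f x ^ 2) {x | f x < b} μ := fun b =>
    Measure.integrableOn_of_bounded (M := b ^ 2) (measure_ne_top μ _)
      (hf.pow_const 2).aestronglyMeasurable
      ((ae_restrict_iff' (hlt b)).2 (.of_forall fun x (hx : f x < b) => by
        rw [Real.norm_of_nonneg (sq_nonneg _)]
        exact pow_le_pow_left₀ (hf0 x) hx.le 2))
  have hdiff := ((tendsto_setIntegral_sq_lt_div_atTop μ hf hf0 htail).comp
    (tendsto_id.const_mul_atTop ha)).const_mul a |>.sub
      ((tendsto_const_nhds (x := ∫ x in {x | f x < a}, f x ^ 2 ∂μ)).div_atTop tendsto_id)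
  rw [sub_zero] at hdiff
  refine hdiff.congr' ?_
  filter_upwards [eventually_ge_atTop 1] with R hR
  have hsub : {x | f x < a} ⊆ {x | f x < a * R} := fun x hx =>
    hx.trans_le (le_mul_of_one_le_right ha.le hR)
  have hset : {x | a ≤ f x ∧ f x < a * R} = {x | f x < a * R} \ {x | f x < a} := by
    ext x; simp [and_comm]
  rw [hset, setIntegral_sdiff (hlt a) (hint _) hsub]
  simp only [Function.comp_apply, id]
  field_simp

end

theorem stmt_5_general {X : Type*} [MeasurableSpace X] (μ : Measure X) [IsProbabilityMeasure μ]
    (ψ : X → ℝ) (hψmeas : Measurable ψ) (hψpos : ∀ x, 0 ≤ ψ x)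
    (ε c : ℝ)
    (htail : Tendsto (fun S : ℝ => (μ {x | 2 / π * S ≤ ψ x}).toReal * S)
      atTop (nhds (π * ε * c))) :
    Tendsto
      (fun R : ℝ =>
        Real.sqrt (∫ x in {x | 2 / π ≤ ψ x ∧ ψ x < 2 / π * R}, ψ x ^ 2 ∂μ)
          / Real.sqrt R)
      atTop (nhds (2 * Real.sqrt (ε * c) / Real.sqrt π)) := by
  set a := 2 / π
  have ha : 0 < a := by positivity
  have htail' : Tendsto (fun t => t * μ.real {x | t ≤ ψ x}) atTop (𝓝 (2 * (ε * c))) := by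
    have h := (htail.comp (tendsto_id.atTop_div_const ha)).const_mul a
    rw [show a * (π * ε * c) = 2 * (ε * c) by simp only [a]; field_simp] at h
    refine h.congr fun t => ?_
    simp only [Function.comp_apply, id, mul_div_cancel₀ t ha.ne', measureReal_def]
    field_simp
  have hlimit : √(a * (2 * (ε * c))) = 2 * √(ε * c) / √π := by
    rw [show a * (2 * (ε * c)) = 2 ^ 2 * (ε * c) / π by simp only [a]; ring,
      Real.sqrt_div' _ pi_pos.le, Real.sqrt_mul (sq_nonneg 2), Real.sqrt_sq zero_le_two]
  rw [← hlimit]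
  refine (tendsto_setIntegral_sq_Ico_div_atTop μ hψmeas hψpos htail' ha).sqrt.congr' ?_
  filter_upwards [eventually_ge_atTop 0] with R hR
  rw [Real.sqrt_div' _ hR]

/-- L² asymptotics of the truncations Ψ_R (Lemma 5.1, second part, abstract version). -/
theorem stmt_5 {X : Type*} [MeasurableSpace X] (μ : Measure X) [IsProbabilityMeasure μ]
    (ψ : X → ℝ) (hψmeas : Measurable ψ) (hψpos : ∀ x, 0 ≤ ψ x)
    (ε c : ℝ) (hε : 0 < ε) (hc : 0 < c)
    (htail : Tendsto (fun S : ℝ => (μ {x | 2 / π * S ≤ ψ x}).toReal * S)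
      atTop (nhds (π * ε * c))) :
    Tendsto
      (fun R : ℝ =>
        Real.sqrt (∫ x in {x | 2 / π ≤ ψ x ∧ ψ x < 2 / π * R}, ψ x ^ 2 ∂μ)
          / Real.sqrt R)
      atTop (nhds (2 * Real.sqrt (ε * c) / Real.sqrt π)) :=
  stmt_5_general μ ψ hψmeas hψpos ε c htail
end

section
/- Let r be irrational with convergents p_n/q_n. If |r − p/q| ≤ 1/(2q²) for a rational p/q in lowest terms, then p/q is a convergent of the continued fraction expansion of r. -/
open Real

/-- The Gauss map. -/
noncomputable def gaussMap (x : ℝ) : ℝ := Int.fract x⁻¹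

/-- `cfCoeff r n` is the `(n+1)`-st continued fraction coefficient `a_{n+1}` of `r`. -/
noncomputable def cfCoeff (r : ℝ) (n : ℕ) : ℕ := (⌊(gaussMap^[n] r)⁻¹⌋).toNat

/-- `qDen r n` is the denominator `q_n` of the `n`-th convergent of `r`. -/
noncomputable def qDen (r : ℝ) : ℕ → ℕ
  | 0 => 1
  | 1 => cfCoeff r 0
  | (n + 2) => cfCoeff r (n + 1) * qDen r (n + 1) + qDen r n

/-- `pNum r n` is the numerator `p_n` of the `n`-th convergent of `r`. -/
noncomputable def pNum (r : ℝ) : ℕ → ℕ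
  | 0 => 0
  | 1 => 1
  | (n + 2) => cfCoeff r (n + 1) * pNum r (n + 1) + pNum r n

/-! `pNum` and `qDen` follow the forward three-term recursion, whereas `Real.convergent` recurses
on the tail of the expansion, `[a₁, a₂, …] = 1 / (a₁ + [a₂, …])` for `r ∈ (0, 1)`. The shift
identities `p_{n+1}(r) = q_n(G r)` and `q_{n+1}(r) = a₁ q_n(G r) + p_n(G r)`, with `G` the Gauss map,
identify the two as long as no `q_n` vanishes, which irrationality of `r` guarantees. Legendre's
theorem is then `Real.exists_rat_eq_convergent`: the bound `1/(2q²)` cannot be attained by an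
irrational `r`, so it is strict. -/

theorem Real.convergent_intCast_add (m : ℤ) (ξ : ℝ) (n : ℕ) :
    (m + ξ).convergent n = m + ξ.convergent n := by
  cases n <;> simp [Int.floor_intCast_add, Int.fract_intCast_add, add_assoc]

theorem Real.convergent_succ_of_mem_Ico {x : ℝ} (hx : x ∈ Set.Ico (0 : ℝ) 1) (n : ℕ) :
    x.convergent (n + 1) = (⌊x⁻¹⌋ + (gaussMap x).convergent n)⁻¹ := by
  rw [Real.convergent_succ, Int.floor_eq_zero_iff.mpr hx, Int.fract_eq_self.mpr hx,
    ← Int.floor_add_fract x⁻¹, Real.convergent_intCast_add, Int.floor_intCast_add,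
    Int.floor_eq_zero_iff.mpr ⟨Int.fract_nonneg _, Int.fract_lt_one _⟩]
  simp [gaussMap]

theorem Irrational.gaussMap {x : ℝ} (hx : Irrational x) : Irrational (gaussMap x) :=
  hx.inv.sub_intCast _

theorem gaussMap_mem_Ioo {x : ℝ} (hx : Irrational x) : gaussMap x ∈ Set.Ioo (0 : ℝ) 1 :=
  ⟨(Int.fract_nonneg _).lt_of_ne' hx.gaussMap.ne_zero, Int.fract_lt_one _⟩

theorem cfCoeff_succ (r : ℝ) (n : ℕ) : cfCoeff r (n + 1) = cfCoeff (gaussMap r) n := by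
  simp [cfCoeff, Function.iterate_succ_apply]

theorem natCast_cfCoeff_zero {x : ℝ} (hx : 0 < x) : (cfCoeff x 0 : ℤ) = ⌊x⁻¹⌋ :=
  Int.toNat_of_nonneg (Int.floor_nonneg.mpr (inv_pos.mpr hx).le)

theorem one_le_cfCoeff_zero {x : ℝ} (hx : x ∈ Set.Ioo (0 : ℝ) 1) : 1 ≤ cfCoeff x 0 := by
  have hfloor : (1 : ℤ) ≤ ⌊x⁻¹⌋ :=
    Int.le_floor.mpr (by simpa using ((one_lt_inv₀ hx.1).mpr hx.2).le)
  have := natCast_cfCoeff_zero hx.1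
  omega

theorem pNum_succ_and_qDen_succ (r : ℝ) (n : ℕ) :
    pNum r (n + 1) = qDen (gaussMap r) n ∧
      qDen r (n + 1) = cfCoeff r 0 * qDen (gaussMap r) n + pNum (gaussMap r) n := by
  induction n using Nat.strong_induction_on with
  | _ n ih =>
    rcases n with _ | _ | n
    · simp [pNum, qDen]
    · simp [pNum, qDen, cfCoeff_succ, mul_comm]
    · obtain ⟨ihp₁, ihq₁⟩ := ih (n + 1) (by omega)
      obtain ⟨ihp₀, ihq₀⟩ := ih n (by omega)
      simp only [pNum, qDen] at ihp₁ ihq₁ ihp₀ ihq₀ ⊢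
      rw [ihp₁, ihq₁, ihp₀, ihq₀, cfCoeff_succ]
      constructor <;> ring

theorem qDen_pos {x : ℝ} (hx : Irrational x) (hx01 : x ∈ Set.Ioo (0 : ℝ) 1) (n : ℕ) :
    0 < qDen x n := by
  induction n generalizing x with
  | zero => simp [qDen]
  | succ n ih =>
    rw [(pNum_succ_and_qDen_succ x n).2]
    have := Nat.mul_pos (one_le_cfCoeff_zero hx01) (ih hx.gaussMap (gaussMap_mem_Ioo hx))
    omega

theorem Real.convergent_eq_pNum_div_qDen {x : ℝ} (hx : Irrational x)
    (hx01 : x ∈ Set.Ioo (0 : ℝ) 1) (n : ℕ) :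
    x.convergent n = (pNum x n : ℚ) / qDen x n := by
  induction n generalizing x with
  | zero => simp [pNum, qDen, Int.floor_eq_zero_iff.mpr ⟨hx01.1.le, hx01.2⟩]
  | succ n ih =>
    obtain ⟨hp, hq⟩ := pNum_succ_and_qDen_succ x n
    have hq₀ : (qDen (gaussMap x) n : ℚ) ≠ 0 :=
      Nat.cast_ne_zero.mpr (qDen_pos hx.gaussMap (gaussMap_mem_Ioo hx) n).ne'
    rw [Real.convergent_succ_of_mem_Ico ⟨hx01.1.le, hx01.2⟩, ih hx.gaussMap (gaussMap_mem_Ioo hx),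
      hp, hq, ← natCast_cfCoeff_zero hx01.1]
    field_simp
    push_cast
    ring

theorem Irrational.abs_sub_ratCast_ne {r : ℝ} (hr : Irrational r) (a b : ℚ) :
    |r - a| ≠ b := by
  intro h
  rcases (abs_eq (h ▸ abs_nonneg _)).mp h with h' | h'
  · exact hr.ne_rat (a + b) (by push_cast; linarith)
  · exact hr.ne_rat (a - b) (by push_cast; linarith)

/-- Legendre's theorem: a reduced fraction `p/q` with `|r − p/q| ≤ 1/(2q²)` is a
convergent of the continued fraction expansion of `r`. -/
theorem stmt_10 (r : ℝ) (hr01 : r ∈ Set.Ioo (0:ℝ) 1) (hr : Irrational r) (p : ℤ) (q : ℕ) (hq : 0 < q)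
    (hcop : Int.gcd p (q : ℤ) = 1)
    (happrox : |r - (p : ℝ) / (q : ℝ)| ≤ 1 / (2 * (q : ℝ) ^ 2)) :
    ∃ n : ℕ, (p : ℝ) / (q : ℝ) = (pNum r n : ℝ) / (qDen r n : ℝ) := by
  have hden : (p / q : ℚ).den = q := by
    exact_mod_cast Rat.den_div_eq_of_coprime (a := p) (b := q) (by exact_mod_cast hq) hcop
  generalize hx' : (p / q : ℚ) = x at hden
  have hx : (x : ℝ) = p / q := by rw [← hx']; norm_cast
  have hne : |r - p / q| ≠ 1 / (2 * (q : ℝ) ^ 2) := by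
    have := hr.abs_sub_ratCast_ne x (1 / (2 * q ^ 2))
    push_cast [hx] at this
    exact this
  have hlt : |r - x| < 1 / (2 * (x.den : ℝ) ^ 2) := by
    rw [hden, hx]
    exact happrox.lt_of_ne hne
  obtain ⟨n, hn⟩ := Real.exists_rat_eq_convergent hlt
  refine ⟨n, ?_⟩
  rw [← hx, hn, Real.convergent_eq_pNum_div_qDen hr hr01 n, Rat.cast_div,
    Rat.cast_natCast, Rat.cast_natCast]
end
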